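/- arXiv:0809.2538 — 7 statements merged into one kernel-verified Lean document; each statement's English description precedes it below -/
import Mathlib

section
/- Let M > 0 and σ < 0 be real numbers, and let T > 0 with T ≤ -2σ/√M. Suppose s : [0,T) → ℝ is differentiable, satisfies s'(t) ≤ -(1/2) s(t)² + (1/2) M for all t ∈ [0,T), and s(0) ≤ √M · coth(σ). Then for every t ∈ [0,T) one has s(t) ≤ √M · coth(σ + (t/2)√M). -/
/-!
The function `φ t = √M coth (σ + t √M / 2)` solves the Riccati equation `φ' = -φ²/2 + M/2`
exactly as long as the argument of `coth` stays away from `0`, and `T ≤ -2σ/√M` keeps it negative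
on `[0, T)`. Where `s ≥ φ`, the difference `w = s - φ` satisfies
`w' ≤ -(s + φ) w / 2 ≤ -(inf φ) w`, and fencing `w` by `ε e^{Lt}` with `L` larger than this
rate keeps `w ≤ 0`.
-/

open Set

noncomputable def coth (x : ℝ) : ℝ := Real.cosh x / Real.sinh x

theorem nonpos_of_deriv_right_le_mul_of_nonneg {w w' : ℝ → ℝ} {a b L : ℝ}
    (hw : ContinuousOn w (Icc a b))
    (hw' : ∀ x ∈ Ico a b, HasDerivWithinAt w (w' x) (Ici x) x)
    (ha : w a ≤ 0) (bound : ∀ x ∈ Ico a b, 0 ≤ w x → w' x ≤ L * w x) :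
    ∀ x ∈ Icc a b, w x ≤ 0 := by
  intro x hx
  suffices h : ∀ ε > 0, w x ≤ ε * Real.exp ((L + 1) * (x - a)) by
    refine le_of_forall_pos_le_add fun δ hδ => ?_
    have hexp := Real.exp_pos ((L + 1) * (x - a))
    simpa [hexp.ne'] using h (δ / Real.exp ((L + 1) * (x - a))) (div_pos hδ hexp)
  intro ε hε
  set B : ℝ → ℝ := fun y => ε * Real.exp ((L + 1) * (y - a))
  have hB : ∀ y, HasDerivAt B ((L + 1) * B y) y := fun y => by
    refine ((((hasDerivAt_id y).sub_const a).const_mul (L + 1)).exp.const_mul ε).congr_deriv ?_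
    simp only [B, id]
    ring
  refine image_le_of_deriv_right_lt_deriv_boundary' hw hw' (by simpa [B] using ha.trans hε.le)
    (fun y _ => (hB y).continuousAt.continuousWithinAt) (fun y _ => (hB y).hasDerivWithinAt)
    (fun y hy hwy => ?_) hx
  have hBy : 0 < B y := by positivity
  calc w' y ≤ L * w y := bound y hy (hwy ▸ hBy.le)
    _ < (L + 1) * B y := by rw [hwy]; linarith

theorem le_of_riccati_subsolution_supersolution {s s' φ φ' : ℝ → ℝ} {a b M : ℝ}
    (hs : ContinuousOn s (Icc a b)) (hs' : ∀ x ∈ Ico a b, HasDerivWithinAt s (s' x) (Ici x) x)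
    (hφ : ContinuousOn φ (Icc a b)) (hφ' : ∀ x ∈ Ico a b, HasDerivWithinAt φ (φ' x) (Ici x) x)
    (hs_sub : ∀ x ∈ Ico a b, s' x ≤ -(1/2) * s x ^ 2 + (1/2) * M)
    (hφ_super : ∀ x ∈ Ico a b, -(1/2) * φ x ^ 2 + (1/2) * M ≤ φ' x)
    (ha : s a ≤ φ a) : ∀ x ∈ Icc a b, s x ≤ φ x := by
  obtain ⟨m, hm⟩ := isCompact_Icc.bddBelow_image hφ
  -- Where `s ≥ φ`, `(s - φ)' ≤ -(s - φ)²/2 - φ (s - φ) ≤ -m (s - φ)` for a lower bound `m` of `φ`.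
  have hdiff := nonpos_of_deriv_right_le_mul_of_nonneg (L := -m) (hs.sub hφ)
    (fun x hx => (hs' x hx).sub (hφ' x hx)) (sub_nonpos.2 ha) fun x hx hsφ => by
      simp only [Pi.sub_apply] at hsφ ⊢
      have hmφ : m ≤ φ x := hm (mem_image_of_mem φ (Ico_subset_Icc_self hx))
      nlinarith [hs_sub x hx, hφ_super x hx, mul_le_mul_of_nonneg_right hmφ hsφ]
  exact fun x hx => sub_nonpos.1 (hdiff x hx)

theorem hasDerivAt_coth {x : ℝ} (hx : x ≠ 0) : HasDerivAt coth (1 - coth x ^ 2) x := by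
  have hsinh : Real.sinh x ≠ 0 := by simpa using hx
  refine ((Real.hasDerivAt_cosh x).div (Real.hasDerivAt_sinh x) hsinh).congr_deriv ?_
  rw [coth, div_pow, one_sub_div (pow_ne_zero 2 hsinh)]
  ring

theorem hasDerivAt_const_mul_coth_affine (c σ : ℝ) {t : ℝ} (ht : σ + t / 2 * c ≠ 0) :
    HasDerivAt (fun t => c * coth (σ + t / 2 * c))
      (-(1/2) * (c * coth (σ + t / 2 * c)) ^ 2 + (1/2) * c ^ 2) t := by
  have harg : HasDerivAt (fun t => σ + t / 2 * c) (1 / 2 * c) t :=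
    (((hasDerivAt_id t).div_const 2).mul_const c).const_add σ
  refine (((hasDerivAt_coth ht).comp t harg).const_mul c).congr_deriv ?_
  ring

theorem slope_le_coth_supersolution_general
    (M σ T : ℝ) (hM : 0 < M)
    (hT' : T ≤ -2 * σ / Real.sqrt M)
    (s s' : ℝ → ℝ)
    (hderiv : ∀ t ∈ Set.Ico (0 : ℝ) T, HasDerivWithinAt s (s' t) (Set.Ico 0 T) t)
    (hineq : ∀ t ∈ Set.Ico (0 : ℝ) T, s' t ≤ -(1/2) * (s t)^2 + (1/2) * M)
    (h0 : s 0 ≤ Real.sqrt M * coth σ) :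
    ∀ t ∈ Set.Ico (0 : ℝ) T,
      s t ≤ Real.sqrt M * coth (σ + (t / 2) * Real.sqrt M) := by
  intro t ht
  have hsqrt : 0 < Real.sqrt M := Real.sqrt_pos.2 hM
  have harg : ∀ x < T, σ + x / 2 * Real.sqrt M < 0 := fun x hx => by
    nlinarith [(le_div_iff₀ hsqrt).1 hT']
  have hφ : ∀ x < T, HasDerivAt (fun x => Real.sqrt M * coth (σ + x / 2 * Real.sqrt M))
      (-(1/2) * (Real.sqrt M * coth (σ + x / 2 * Real.sqrt M)) ^ 2 + (1/2) * M) x := fun x hx => by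
    simpa [Real.sq_sqrt hM.le] using hasDerivAt_const_mul_coth_affine (Real.sqrt M) σ (harg x hx).ne
  have hIcc : Icc 0 t ⊆ Ico 0 T := Icc_subset_Ico_right ht.2
  have hIco : ∀ x ∈ Ico 0 t, x < T := fun x hx => hx.2.trans ht.2
  refine le_of_riccati_subsolution_supersolution
    (fun x hx => (hderiv x (hIcc hx)).continuousWithinAt.mono hIcc)
    (fun x hx => (hderiv x (hIcc (Ico_subset_Icc_self hx))).mono_of_mem_nhdsWithin
      (Filter.mem_of_superset (Ico_mem_nhdsGE (hIco x hx)) (Ico_subset_Ico_left hx.1)))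
    (fun x hx => (hφ x (lt_of_le_of_lt hx.2 ht.2)).continuousAt.continuousWithinAt)
    (fun x hx => (hφ x (hIco x hx)).hasDerivWithinAt)
    (fun x hx => hineq x (hIcc (Ico_subset_Icc_self hx))) (fun _ _ => le_rfl) (by simpa using h0)
    t (right_mem_Icc.2 ht.1)

/-- Riccati comparison: under `s' ≤ -s²/2 + M/2` with sufficiently negative
initial data `s 0 ≤ √M coth σ`, the slope is dominated by the coth supersolution
on `[0, T)` for `T ≤ -2σ/√M`. -/
theorem slope_le_coth_supersolution
    (M σ T : ℝ) (hM : 0 < M) (hσ : σ < 0) (hT : 0 < T)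
    (hT' : T ≤ -2 * σ / Real.sqrt M)
    (s s' : ℝ → ℝ)
    (hderiv : ∀ t ∈ Set.Ico (0 : ℝ) T, HasDerivWithinAt s (s' t) (Set.Ico 0 T) t)
    (hineq : ∀ t ∈ Set.Ico (0 : ℝ) T, s' t ≤ -(1/2) * (s t)^2 + (1/2) * M)
    (h0 : s 0 ≤ Real.sqrt M * coth σ) :
    ∀ t ∈ Set.Ico (0 : ℝ) T,
      s t ≤ Real.sqrt M * coth (σ + (t / 2) * Real.sqrt M) :=
  slope_le_coth_supersolution_general M σ T hM hT' s s' hderiv hineq h0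
end

section
/- Let α > 0 and c ∈ ℝ, and define the peakon profile u(x,t) = c e^{-|x-ct|/α}. Then for every t ∈ ℝ and every x ≠ ct, ∂_t u(x,t) + u(x,t) ∂_x u(x,t) + ∂_x [ (1/(2α)) ∫_ℝ e^{-|x-y|/α} ( u(y,t)² + (α²/2) (∂_y u(y,t))² ) dy ] = 0, where ∂_y u(y,t) is defined for y ≠ ct (a set of full measure). That is, the single peakon is an exact traveling-wave solution, away from its peak, of the dispersionless Camassa-Holm equation in the nonlocal form u_t + u u_x = -∂_x K*(u² + (α²/2)u_x²) with K(x) = (1/(2α)) e^{-|x|/α}. -/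
/-!
Off its crest the peakon satisfies `u_x = ∓u/α`, so `u² + (α²/2) u_x² = (3/2) u²`, and an explicit
convolution of exponentials gives the nonlocal term `K * (u² + (α²/2) u_x²) = c u - u²/2`. Its
`x`-derivative is `(c - u) u_x`, so the equation collapses to `u_t + c u_x = 0`, which holds because
`u` is a function of `x - ct`.
-/

open MeasureTheory

/-- The peakon profile `u(x,t) = c e^{-|x - ct|/α}`. -/
noncomputable def peakon (α c x t : ℝ) : ℝ := c * Real.exp (-|x - c * t| / α)

open Real Set

theorem integral_exp_mul {k : ℝ} (hk : k ≠ 0) (a b : ℝ) :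
    ∫ y in a..b, exp (k * y) = (exp (k * b) - exp (k * a)) / k := by
  rw [intervalIntegral.integral_comp_mul_left (fun y => exp y) hk, integral_exp, smul_eq_mul]
  field_simp

theorem exp_neg_abs_sub_div_mul_sq (α X y : ℝ) :
    exp (-|X - y| / α) * exp (-|y| / α) ^ 2 = exp (-(|X - y| + 2 * |y|) / α) := by
  rw [sq, ← exp_add, ← exp_add]
  ring_nf

theorem integral_exp_neg_abs_sub_mul_sq_of_nonneg {α X : ℝ} (hα : 0 < α) (hX : 0 ≤ X) :
    ∫ y, exp (-|X - y| / α) * exp (-|y| / α) ^ 2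
      = 2 * α / 3 * (2 * exp (-X / α) - exp (-X / α) ^ 2) := by
  set f := fun y => exp (-|X - y| / α) * exp (-|y| / α) ^ 2
  have hf : Continuous f := by fun_prop
  have hleft : EqOn f (fun y => exp (-X / α) * exp (3 / α * y)) (Iic 0) := by
    intro y (hy : y ≤ 0)
    simp only [f]
    rw [exp_neg_abs_sub_div_mul_sq, ← exp_add, abs_of_nonneg (by linarith), abs_of_nonpos hy]
    ring_nf
  have hmid : EqOn f (fun y => exp (-X / α) * exp (-1 / α * y)) (uIcc 0 X) := by
    intro y hy
    rw [uIcc_of_le hX] at hy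
    simp only [f]
    rw [exp_neg_abs_sub_div_mul_sq, ← exp_add, abs_of_nonneg (by linarith [hy.2]),
      abs_of_nonneg hy.1]
    ring_nf
  have hright : EqOn f (fun y => exp (X / α) * exp (-3 / α * y)) (Ioi X) := by
    intro y (hy : X < y)
    simp only [f]
    rw [exp_neg_abs_sub_div_mul_sq, ← exp_add, abs_of_nonpos (by linarith),
      abs_of_nonneg (by linarith)]
    ring_nf
  have hneg : -3 / α < 0 := div_neg_of_neg_of_pos (by norm_num) hα
  have hint_left : IntegrableOn f (Iic 0) :=
    IntegrableOn.congr_fun ((integrableOn_exp_mul_Iic (by positivity) 0).const_mul _)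
      hleft.symm measurableSet_Iic
  have hint_right : IntegrableOn f (Ioi X) :=
    IntegrableOn.congr_fun ((integrableOn_exp_mul_Ioi hneg X).const_mul _) hright.symm
      measurableSet_Ioi
  have hint_pos : IntegrableOn f (Ioi 0) := by
    rw [← Ioc_union_Ioi_eq_Ioi hX]
    exact hf.integrableOn_Ioc.union hint_right
  rw [← intervalIntegral.integral_Iic_add_Ioi hint_left hint_pos,
    ← intervalIntegral.integral_interval_add_Ioi hint_pos hint_right,
    setIntegral_congr_fun measurableSet_Iic hleft, intervalIntegral.integral_congr hmid,
    setIntegral_congr_fun measurableSet_Ioi hright, integral_const_mul, integral_const_mul,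
    intervalIntegral.integral_const_mul, integral_exp_mul_Iic (by positivity),
    integral_exp_mul_Ioi hneg, integral_exp_mul (by positivity)]
  have hexp_mid : exp (-1 / α * X) = exp (-X / α) := by ring_nf
  have hexp_right : exp (X / α) * exp (-3 / α * X) = exp (-X / α) ^ 2 := by
    rw [sq, ← exp_add, ← exp_add]; ring_nf
  rw [mul_div_assoc' (exp (X / α)), mul_neg, hexp_right, hexp_mid]
  simp only [mul_zero, exp_zero]
  generalize exp (-X / α) = e
  field_simp
  ring

theorem integral_exp_neg_abs_sub_mul_sq {α : ℝ} (hα : 0 < α) (X : ℝ) :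
    ∫ y, exp (-|X - y| / α) * exp (-|y| / α) ^ 2
      = 2 * α / 3 * (2 * exp (-|X| / α) - exp (-|X| / α) ^ 2) := by
  rcases le_total 0 X with hX | hX
  · rw [abs_of_nonneg hX]
    exact integral_exp_neg_abs_sub_mul_sq_of_nonneg hα hX
  · rw [abs_of_nonpos hX, ← integral_exp_neg_abs_sub_mul_sq_of_nonneg hα (neg_nonneg.2 hX),
      ← integral_neg_eq_self]
    congr with y
    rw [abs_neg, ← abs_neg (X - -y)]
    ring_nf

theorem hasDerivAt_exp_neg_abs_div (α : ℝ) {ξ : ℝ} (hξ : ξ ≠ 0) :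
    HasDerivAt (fun ξ => exp (-|ξ| / α)) (-(SignType.sign ξ : ℝ) / α * exp (-|ξ| / α)) ξ :=
  ((hasDerivAt_abs hξ).fun_neg.div_const α).exp.congr_deriv (by ring)

section Peakon

variable {α c x t : ℝ}

theorem hasDerivAt_peakon_space (hx : x ≠ c * t) :
    HasDerivAt (fun y => peakon α c y t)
      (-(SignType.sign (x - c * t) : ℝ) / α * peakon α c x t) x := by
  refine (((hasDerivAt_exp_neg_abs_div α (sub_ne_zero.2 hx)).comp_sub_const x (c * t)).const_mul
    c).congr_deriv ?_
  rw [peakon]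
  ring

theorem hasDerivAt_peakon_time (hx : x ≠ c * t) :
    HasDerivAt (fun τ => peakon α c x τ)
      (-c * (-(SignType.sign (x - c * t) : ℝ) / α * peakon α c x t)) t := by
  have hξ : HasDerivAt (fun τ => x - c * τ) (-c) t := by
    simpa using ((hasDerivAt_id t).const_mul c).const_sub x
  refine (((hasDerivAt_exp_neg_abs_div α (sub_ne_zero.2 hx)).comp t hξ).const_mul c).congr_deriv ?_
  rw [peakon]
  ring

theorem peakon_sq_add_sq_deriv (hα : α ≠ 0) (hx : x ≠ c * t) :
    peakon α c x t ^ 2 + α ^ 2 / 2 * deriv (fun y => peakon α c y t) x ^ 2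
      = 3 / 2 * peakon α c x t ^ 2 := by
  have hsign : (SignType.sign (x - c * t) : ℝ) ^ 2 = 1 := by
    rcases (sub_ne_zero.2 hx).lt_or_gt with h | h <;> simp [h]
  rw [(hasDerivAt_peakon_space hx).deriv, mul_pow, div_pow, neg_sq, hsign]
  field_simp
  ring

end Peakon

/-- The nonlocal term of the Camassa–Holm equation `u_t + u u_x = -∂_x (chPressure α u)`. -/
noncomputable def chPressure (α : ℝ) (u : ℝ → ℝ) (x : ℝ) : ℝ :=
  1 / (2 * α) * ∫ y, exp (-|x - y| / α) * (u y ^ 2 + α ^ 2 / 2 * deriv u y ^ 2)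

theorem chPressure_peakon {α : ℝ} (hα : 0 < α) (c t x : ℝ) :
    chPressure α (fun y => peakon α c y t) x = c * peakon α c x t - peakon α c x t ^ 2 / 2 := by
  have hae : (fun y => exp (-|x - y| / α) *
        (peakon α c y t ^ 2 + α ^ 2 / 2 * deriv (fun z => peakon α c z t) y ^ 2))
      =ᵐ[volume] fun y => 3 / 2 * c ^ 2 * (exp (-|x - y| / α) * exp (-|y - c * t| / α) ^ 2) := by
    filter_upwards [volume.ae_ne (c * t)] with y hy
    rw [peakon_sq_add_sq_deriv hα.ne' hy, peakon]
    ring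
  have hshift : ∫ y, exp (-|x - y| / α) * exp (-|y - c * t| / α) ^ 2
      = ∫ y, exp (-|(x - c * t) - y| / α) * exp (-|y| / α) ^ 2 := by
    rw [← integral_add_right_eq_self _ (c * t)]
    congr with y
    ring_nf
  rw [chPressure, integral_congr_ae hae, integral_const_mul, hshift,
    integral_exp_neg_abs_sub_mul_sq hα, peakon]
  field_simp

/-- The single peakon is an exact traveling-wave solution, away from its peak, of the
dispersionless Camassa-Holm equation in the nonlocal form
`u_t + u u_x = -∂_x K * (u² + (α²/2) u_x²)` with `K(x) = (1/(2α)) e^{-|x|/α}`. -/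
theorem peakon_solves_CH
    (α c : ℝ) (hα : 0 < α) :
    ∀ t x : ℝ, x ≠ c * t →
      deriv (fun τ => peakon α c x τ) t
        + peakon α c x t * deriv (fun y => peakon α c y t) x
        + deriv (fun x' => (1/(2*α)) * ∫ y : ℝ,
            Real.exp (-|x' - y|/α) *
              ((peakon α c y t)^2 + (α^2/2) * (deriv (fun z => peakon α c z t) y)^2)) x
      = 0 := by
  intro t x hx
  have hux := hasDerivAt_peakon_space (α := α) hx
  have hP : HasDerivAt (chPressure α fun y => peakon α c y t)
      ((c - peakon α c x t) * (-(SignType.sign (x - c * t) : ℝ) / α * peakon α c x t)) x := by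
    rw [funext (chPressure_peakon hα c t)]
    exact ((hux.const_mul c).fun_sub ((hux.fun_pow 2).div_const 2)).congr_deriv (by ring)
  change _ + _ + deriv (chPressure α fun y => peakon α c y t) x = 0
  rw [(hasDerivAt_peakon_time hx).deriv, hux.deriv, hP.deriv]
  ring
end

section
/- Let c₁, c₂, w₁, w₂ be real numbers with c₁ ≠ c₂, c₁c₂ + w₁w₂ > 0, and (c₁ + c₂)² + 4 w₁ w₂ > 0. Then the quantity K* := 1 - 4(c₁c₂ + w₁w₂) / ( (c₁ + c₂)² + 4 w₁ w₂ ) satisfies 0 < K* < 1. Moreover, if K is a real number with K ≠ 1 satisfying the momentum relation 0 + (w₁ - w₂)² = -4(c₁c₂ + w₁w₂)/(1 - K) + (w₁ + w₂)² + (c₁ + c₂)² (i.e., the momentum relation with p = 0), then K = K*. -/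
/-!
Write `N = 4(c₁c₂ + w₁w₂)` and `D = (c₁ + c₂)² + 4w₁w₂`. Since `D - N = (c₁ - c₂)²`, the
hypotheses give `0 < N < D`, so `K* = 1 - N / D` lies in `(0, 1)`. Because
`(w₁ + w₂)² - (w₁ - w₂)² = 4w₁w₂`, the momentum relation at `p = 0` collapses to
`N / (1 - K) = D`, which determines `K = 1 - N / D`.
-/

lemma one_sub_div_mem_Ioo {N D : ℝ} (hN : 0 < N) (hND : N < D) :
    0 < 1 - N / D ∧ 1 - N / D < 1 := by
  have hD : 0 < D := hN.trans hND
  exact ⟨sub_pos.2 ((div_lt_one hD).2 hND), sub_lt_self _ (div_pos hN hD)⟩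

lemma eq_one_sub_div_of_div_one_sub_eq {N D K : ℝ} (hK : K ≠ 1) (hD : D ≠ 0)
    (h : N / (1 - K) = D) : K = 1 - N / D := by
  rw [div_eq_iff (sub_ne_zero.2 hK.symm)] at h
  rw [h, mul_div_cancel_left₀ _ hD]
  ring

lemma momentum_zero_iff_div_one_sub_eq (c₁ c₂ w₁ w₂ K : ℝ) :
    0 + (w₁ - w₂)^2 = -4*(c₁*c₂ + w₁*w₂) / (1 - K) + (w₁ + w₂)^2 + (c₁ + c₂)^2 ↔
      4*(c₁*c₂ + w₁*w₂) / (1 - K) = (c₁ + c₂)^2 + 4*w₁*w₂ := by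
  constructor <;> intro h <;> linear_combination h

theorem overtaking_min_separation_general
    (c₁ c₂ w₁ w₂ : ℝ) (hne : c₁ ≠ c₂)
    (hpos : 0 < c₁*c₂ + w₁*w₂) :
    (0 < 1 - 4*(c₁*c₂ + w₁*w₂) / ((c₁ + c₂)^2 + 4*w₁*w₂) ∧
      1 - 4*(c₁*c₂ + w₁*w₂) / ((c₁ + c₂)^2 + 4*w₁*w₂) < 1) ∧
    ∀ K : ℝ, K ≠ 1 →
      0 + (w₁ - w₂)^2
        = -4*(c₁*c₂ + w₁*w₂) / (1 - K) + (w₁ + w₂)^2 + (c₁ + c₂)^2 →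
      K = 1 - 4*(c₁*c₂ + w₁*w₂) / ((c₁ + c₂)^2 + 4*w₁*w₂) := by
  have hN : 0 < 4*(c₁*c₂ + w₁*w₂) := by positivity
  have hgap : 4*(c₁*c₂ + w₁*w₂) < (c₁ + c₂)^2 + 4*w₁*w₂ := by
    have hsq : 0 < (c₁ - c₂)^2 := sq_pos_of_ne_zero (sub_ne_zero.2 hne)
    linear_combination hsq
  refine ⟨one_sub_div_mem_Ioo hN hgap, fun K hK h => ?_⟩
  exact eq_one_sub_div_of_div_one_sub_eq hK (hN.trans hgap).ne'
    ((momentum_zero_iff_div_one_sub_eq c₁ c₂ w₁ w₂ K).1 h)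

/-- Minimum peak separation for overtaking collisions of two MCH2 peakons:
the kernel value `K* = 1 - 4(c₁c₂ + w₁w₂)/((c₁+c₂)² + 4w₁w₂)` lies strictly
between 0 and 1, and it is the unique kernel value at which the momentum
difference `p` vanishes. -/
theorem overtaking_min_separation
    (c₁ c₂ w₁ w₂ : ℝ) (hne : c₁ ≠ c₂)
    (hpos : 0 < c₁*c₂ + w₁*w₂) (hden : 0 < (c₁ + c₂)^2 + 4*w₁*w₂) :
    (0 < 1 - 4*(c₁*c₂ + w₁*w₂) / ((c₁ + c₂)^2 + 4*w₁*w₂) ∧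
      1 - 4*(c₁*c₂ + w₁*w₂) / ((c₁ + c₂)^2 + 4*w₁*w₂) < 1) ∧
    ∀ K : ℝ, K ≠ 1 →
      0 + (w₁ - w₂)^2
        = -4*(c₁*c₂ + w₁*w₂) / (1 - K) + (w₁ + w₂)^2 + (c₁ + c₂)^2 →
      K = 1 - 4*(c₁*c₂ + w₁*w₂) / ((c₁ + c₂)^2 + 4*w₁*w₂) :=
  overtaking_min_separation_general c₁ c₂ w₁ w₂ hne hpos
end

section
/- Let α > 0, q₀ > 0, c₀ ≠ 0, and e₀ ∈ ℝ. Then the function F(q) = ( [ 4(c₀² + e₀²) - 4 e₀² (1 - e^{-q/α}) ] · (1 - e^{-q/α}) )^{-1/2} is integrable on the interval (0, q₀]; that is, the improper integral ∫₀^{q₀} F(q) dq is finite. -/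
/-!
Near `q = 0` the kernel gap `1 - e^{-q/α}` vanishes only linearly, while the first factor
`4c₀² + 4e₀² e^{-q/α}` stays above `4c₀² > 0`. Hence the radicand is at least `M q` on
`(0, q₀]` for some `M > 0`, and the integrand is dominated by the integrable `(M q)^{-1/2}`.
-/

open MeasureTheory Set Real

theorem integrableOn_Ioc_inv_sqrt_of_mul_le {g : ℝ → ℝ} {m b : ℝ} (hm : 0 < m)
    (hg : Measurable g) (hle : ∀ x ∈ Ioc 0 b, m * x ≤ g x) :
    IntegrableOn (fun x => (√(g x))⁻¹) (Ioc 0 b) := by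
  have hdom : IntegrableOn (fun x : ℝ => (√m)⁻¹ * x ^ (-(1 / 2) : ℝ)) (Ioc 0 b) :=
    ((intervalIntegral.intervalIntegrable_rpow' (by norm_num)).def'.mono_set
      Ioc_subset_uIoc).const_mul _
  refine hdom.mono' (hg.sqrt.inv.aestronglyMeasurable) ?_
  rw [ae_restrict_iff' measurableSet_Ioc]
  filter_upwards with x hx
  have hx0 : 0 < x := hx.1
  calc ‖(√(g x))⁻¹‖ = (√(g x))⁻¹ := by rw [norm_inv, norm_of_nonneg (sqrt_nonneg _)]
    _ ≤ (√(m * x))⁻¹ := inv_anti₀ (by positivity) (sqrt_le_sqrt (hle x hx))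
    _ = (√m)⁻¹ * x ^ (-(1 / 2) : ℝ) := by
      rw [sqrt_mul hm.le, mul_inv, rpow_neg hx0.le, ← sqrt_eq_rpow]

theorem mul_exp_neg_le_one_sub_exp_neg (x : ℝ) : x * exp (-x) ≤ 1 - exp (-x) := by
  have h := mul_le_mul_of_nonneg_right (add_one_le_exp x) (exp_pos (-x)).le
  rwa [← exp_add, add_neg_cancel, exp_zero, add_mul, one_mul, ← le_sub_iff_add_le] at h

theorem exp_neg_div_mul_le_one_sub_exp_neg_div {α q q₀ : ℝ} (hα : 0 < α) (hq : 0 ≤ q)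
    (hqq₀ : q ≤ q₀) : exp (-q₀ / α) / α * q ≤ 1 - exp (-q / α) := by
  have hexp : exp (-q₀ / α) ≤ exp (-q / α) := exp_le_exp.mpr (by gcongr)
  calc exp (-q₀ / α) / α * q = q / α * exp (-q₀ / α) := by ring
    _ ≤ q / α * exp (-q / α) := mul_le_mul_of_nonneg_left hexp (by positivity)
    _ ≤ 1 - exp (-q / α) := by rw [neg_div]; exact mul_exp_neg_le_one_sub_exp_neg _

theorem mul_le_headon_radicand {α q q₀ : ℝ} (c₀ e₀ : ℝ) (hα : 0 < α) (hq : 0 ≤ q)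
    (hqq₀ : q ≤ q₀) :
    4 * c₀ ^ 2 * exp (-q₀ / α) / α * q ≤
      (4 * (c₀ ^ 2 + e₀ ^ 2) - 4 * e₀ ^ 2 * (1 - exp (-q / α))) * (1 - exp (-q / α)) := by
  have hgap := exp_neg_div_mul_le_one_sub_exp_neg_div hα hq hqq₀
  have hfirst : 4 * c₀ ^ 2 ≤ 4 * (c₀ ^ 2 + e₀ ^ 2) - 4 * e₀ ^ 2 * (1 - exp (-q / α)) := by
    linarith [mul_nonneg (sq_nonneg e₀) (exp_pos (-q / α)).le]
  calc 4 * c₀ ^ 2 * exp (-q₀ / α) / α * q = 4 * c₀ ^ 2 * (exp (-q₀ / α) / α * q) := by ring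
    _ ≤ _ := mul_le_mul hfirst hgap (by positivity) (le_trans (by positivity) hfirst)

theorem headon_collision_time_finite_general
    (α q₀ c₀ e₀ : ℝ) (hα : 0 < α) (hc₀ : c₀ ≠ 0) :
    IntegrableOn
      (fun q : ℝ =>
        (Real.sqrt ((4*(c₀^2 + e₀^2) - 4*e₀^2*(1 - Real.exp (-q/α)))
            * (1 - Real.exp (-q/α))))⁻¹)
      (Set.Ioc 0 q₀) :=
  integrableOn_Ioc_inv_sqrt_of_mul_le (m := 4 * c₀ ^ 2 * exp (-q₀ / α) / α) (by positivity)
    (by fun_prop) fun _ hq => mul_le_headon_radicand c₀ e₀ hα hq.1.le hq.2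

/-- Finite collision time for an antisymmetric head-on collision of two MCH2 peakons
with Helmholtz kernel `K(q) = e^{-q/α}`: the quadrature integrand
`1/√([4(c₀² + e₀²) - 4e₀²(1 - K(q))](1 - K(q)))` is integrable near `q = 0`. -/
theorem headon_collision_time_finite
    (α q₀ c₀ e₀ : ℝ) (hα : 0 < α) (hq₀ : 0 < q₀) (hc₀ : c₀ ≠ 0) :
    IntegrableOn
      (fun q : ℝ =>
        (Real.sqrt ((4*(c₀^2 + e₀^2) - 4*e₀^2*(1 - Real.exp (-q/α)))
            * (1 - Real.exp (-q/α))))⁻¹)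
      (Set.Ioc 0 q₀) :=
  headon_collision_time_finite_general α q₀ c₀ e₀ hα hc₀
end

section
/- Let α > 0 and q₀ > 0, and let q : [0,∞) → ℝ be a differentiable function with q(0) = q₀ and q'(τ) = -(1 - e^{-q(τ)/α}) for all τ ≥ 0. Then q(τ) > 0 for every τ ≥ 0, and q(τ) → 0 as τ → ∞. In particular, q never reaches 0 in finite time. -/
/-!
The quantity `(exp (q τ / α) - 1) * exp (τ / α)` is a first integral of
`q' = -(1 - exp (-q / α))`. Hence every solution is explicitly
`q τ = α log (1 + (exp (q₀ / α) - 1) exp (-τ / α))`, which is positive for all `τ` and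
decays to `α log 1 = 0` only as `τ → ∞`.
-/

open Set Filter Real

theorem eq_of_forall_hasDerivWithinAt_Ici_zero {E : Type*} [NormedAddCommGroup E]
    [NormedSpace ℝ E] {f : ℝ → E} {a : ℝ}
    (hf : ∀ x ∈ Ici a, HasDerivWithinAt f 0 (Ici a) x) : ∀ x ∈ Ici a, f x = f a := by
  intro x hx
  have hcont : ContinuousOn f (Icc a x) := fun y hy =>
    (hf y hy.1).continuousWithinAt.mono Icc_subset_Ici_self
  exact constant_of_has_deriv_right_zero hcont
    (fun y hy => (hf y hy.1).mono (Ici_subset_Ici.mpr hy.1)) x (right_mem_Icc.mpr hx)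

namespace CollisionSeparation

variable {α : ℝ} {q : ℝ → ℝ}

noncomputable def firstIntegral (α : ℝ) (q : ℝ → ℝ) (τ : ℝ) : ℝ :=
  (exp (q τ / α) - 1) * exp (τ / α)

theorem hasDerivWithinAt_firstIntegral {s : Set ℝ} {τ : ℝ}
    (hq : HasDerivWithinAt q (-(1 - exp (-(q τ) / α))) s τ) :
    HasDerivWithinAt (firstIntegral α q) 0 s τ := by
  have hexp_q := ((hq.div_const α).exp).sub_const 1
  have hexp_τ := ((hasDerivWithinAt_id τ s).div_const α).exp
  refine (hexp_q.mul hexp_τ).congr_deriv ?_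
  have hinv : exp (q τ / α) * exp (-(q τ) / α) = 1 := by
    rw [← exp_add, neg_div, add_neg_cancel, exp_zero]
  simp only [id]
  linear_combination (exp (τ / α) / α) * hinv

theorem exp_div_eq_of_forall_hasDerivWithinAt
    (hode : ∀ τ ∈ Ici (0 : ℝ),
      HasDerivWithinAt q (-(1 - exp (-(q τ) / α))) (Ici 0) τ) :
    ∀ τ ∈ Ici (0 : ℝ), exp (q τ / α) = 1 + (exp (q 0 / α) - 1) * exp (-(τ / α)) := by
  intro τ hτ
  have hconst := eq_of_forall_hasDerivWithinAt_Ici_zero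
    (fun t ht => hasDerivWithinAt_firstIntegral (hode t ht)) τ hτ
  simp only [firstIntegral, zero_div, exp_zero, mul_one] at hconst
  rw [← hconst, mul_assoc, ← exp_add, add_neg_cancel, exp_zero]
  ring

theorem eq_log_of_forall_hasDerivWithinAt
    (hα : α ≠ 0) (hode : ∀ τ ∈ Ici (0 : ℝ),
      HasDerivWithinAt q (-(1 - exp (-(q τ) / α))) (Ici 0) τ) :
    ∀ τ ∈ Ici (0 : ℝ), q τ = α * log (1 + (exp (q 0 / α) - 1) * exp (-(τ / α))) := by
  intro τ hτ
  rw [← exp_div_eq_of_forall_hasDerivWithinAt hode τ hτ, log_exp]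
  field_simp

theorem log_one_add_mul_exp_pos {c : ℝ} (hc : 0 < c) (τ : ℝ) :
    0 < log (1 + c * exp (-(τ / α))) :=
  log_pos (by have := exp_pos (-(τ / α)); nlinarith)

theorem tendsto_log_one_add_mul_exp (hα : 0 < α) (c : ℝ) :
    Tendsto (fun τ => log (1 + c * exp (-(τ / α)))) atTop (nhds 0) := by
  have hdecay : Tendsto (fun τ => exp (-(τ / α))) atTop (nhds 0) :=
    tendsto_exp_atBot.comp (tendsto_neg_atTop_atBot.comp (tendsto_id.atTop_div_const hα))
  have hinner : Tendsto (fun τ => 1 + c * exp (-(τ / α))) atTop (nhds 1) := by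
    simpa only [mul_zero, add_zero] using (hdecay.const_mul c).const_add 1
  simpa only [log_one, Function.comp_def] using (continuousAt_log one_ne_zero).tendsto.comp hinner

end CollisionSeparation

open CollisionSeparation

/-- In the limiting case `η₁·η₂ = 0` of a pairwise MCH2 peakon collision with
Helmholtz kernel, the rescaled peak separation obeys `dq/dτ = -(1 - e^{-q/α})`;
starting from `q₀ > 0` it stays positive for all time and tends to `0` only
asymptotically: the collision time is infinite. -/
theorem limiting_case_infinite_collision_time
    (α q₀ : ℝ) (hα : 0 < α) (hq₀ : 0 < q₀)
    (q : ℝ → ℝ) (hq0 : q 0 = q₀)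
    (hode : ∀ τ ∈ Set.Ici (0 : ℝ),
      HasDerivWithinAt q (-(1 - Real.exp (-(q τ)/α))) (Set.Ici 0) τ) :
    (∀ τ ∈ Set.Ici (0 : ℝ), 0 < q τ) ∧
    Tendsto q atTop (nhds 0) := by
  have hsol := eq_log_of_forall_hasDerivWithinAt hα.ne' hode
  have hc : 0 < exp (q 0 / α) - 1 := by
    rw [sub_pos, one_lt_exp_iff]
    exact div_pos (hq0 ▸ hq₀) hα
  refine ⟨fun τ hτ => hsol τ hτ ▸ mul_pos hα (log_one_add_mul_exp_pos hc τ), ?_⟩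
  have hlim := (tendsto_log_one_add_mul_exp hα (exp (q 0 / α) - 1)).const_mul α
  rw [mul_zero] at hlim
  exact hlim.congr' (eventually_ge_atTop 0 |>.mono fun τ hτ => (hsol τ hτ).symm)
end

section
/- Let c₁, c₂, w₁, w₂, P₁, P₂, K be real numbers with K ≠ 1 and P₁ + P₂ = c₁ + c₂, and suppose (1/2)(P₁² + P₂²) + K P₁ P₂ - (1/2)(w₁² + w₂²) - K w₁ w₂ = (1/2)(c₁² + c₂²) - (1/2)(w₁² + w₂²). Then (P₁ - P₂)² + (w₁ + w₂)² = -4(c₁c₂ - w₁w₂)/(1 - K) + (w₁ - w₂)² + (c₁ + c₂)². -/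
/-!
With `S = P₁ + P₂ = c₁ + c₂`, both sides of the energy balance are `S²/2` minus a product term,
so conservation of the Hamiltonian pins down the product of the momenta:
`(1 - K) (P₁P₂ - w₁w₂) = c₁c₂ - w₁w₂`. The relation then follows from
`(P₁ - P₂)² = S² - 4 P₁P₂` and `(w₁ + w₂)² - 4 w₁w₂ = (w₁ - w₂)²`.
-/

/-- Its asymptotic value (`K → 0`, `Pᵢ → cᵢ`) is `twoPeakonHamiltonian 0 c₁ c₂ w₁ w₂`. -/
noncomputable def twoPeakonHamiltonian (K P₁ P₂ w₁ w₂ : ℝ) : ℝ :=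
  (1/2) * (P₁^2 + P₂^2) + K * P₁ * P₂ - (1/2) * (w₁^2 + w₂^2) - K * w₁ * w₂

lemma one_sub_mul_momentum_product_eq {c₁ c₂ w₁ w₂ P₁ P₂ K : ℝ} (hP : P₁ + P₂ = c₁ + c₂)
    (hH : twoPeakonHamiltonian K P₁ P₂ w₁ w₂ = twoPeakonHamiltonian 0 c₁ c₂ w₁ w₂) :
    (1 - K) * (P₁ * P₂ - w₁ * w₂) = c₁ * c₂ - w₁ * w₂ := by
  unfold twoPeakonHamiltonian at hH
  linear_combination (1/2 * (P₁ + P₂ + c₁ + c₂)) * hP - hH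

lemma momentum_product_eq {c₁ c₂ w₁ w₂ P₁ P₂ K : ℝ} (hK : K ≠ 1) (hP : P₁ + P₂ = c₁ + c₂)
    (hH : twoPeakonHamiltonian K P₁ P₂ w₁ w₂ = twoPeakonHamiltonian 0 c₁ c₂ w₁ w₂) :
    P₁ * P₂ = w₁ * w₂ + (c₁ * c₂ - w₁ * w₂) / (1 - K) := by
  rw [← one_sub_mul_momentum_product_eq hP hH, mul_div_cancel_left₀ _ (sub_ne_zero.2 hK.symm)]
  ring

/-- Momentum relation for the attractive case (`g = -1`, kernels `K₂ = -K₁ = -K`)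
of pairwise MCH2 peakon interactions: conservation of the two-particle Hamiltonian
yields `(P₁-P₂)² + (w₁+w₂)² = -4(c₁c₂ - w₁w₂)/(1-K) + (w₁-w₂)² + (c₁+c₂)²`. -/
theorem attractive_momentum_relation
    (c₁ c₂ w₁ w₂ P₁ P₂ K : ℝ) (hK : K ≠ 1) (hP : P₁ + P₂ = c₁ + c₂)
    (hH : (1/2) * (P₁^2 + P₂^2) + K * P₁ * P₂
        - (1/2) * (w₁^2 + w₂^2) - K * w₁ * w₂
        = (1/2) * (c₁^2 + c₂^2) - (1/2) * (w₁^2 + w₂^2)) :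
    (P₁ - P₂)^2 + (w₁ + w₂)^2
      = -4 * (c₁*c₂ - w₁*w₂) / (1 - K) + (w₁ - w₂)^2 + (c₁ + c₂)^2 := by
  have hHam : twoPeakonHamiltonian K P₁ P₂ w₁ w₂ = twoPeakonHamiltonian 0 c₁ c₂ w₁ w₂ := by
    unfold twoPeakonHamiltonian; linarith
  have hProd := momentum_product_eq hK hP hHam
  calc (P₁ - P₂)^2 + (w₁ + w₂)^2 = (P₁ + P₂)^2 - 4 * (P₁ * P₂) + (w₁ + w₂)^2 := by ring
    _ = -4 * (c₁*c₂ - w₁*w₂) / (1 - K) + (w₁ - w₂)^2 + (c₁ + c₂)^2 := by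
      rw [hP, hProd]; ring
end

section
/- Let α₁, α₂, g > 0 and T > 0. Let u, ρ̄ : ℝ × [0,T) → ℝ be functions such that u is twice continuously differentiable, ρ̄ is continuously differentiable in x, and for each t the function p(·,t) defined by p(x,t) = u(x,t)² + (α₁²/2) (∂_x u(x,t))² + (g/2) ρ̄(x,t)² - (g α₂²/2) (∂_x ρ̄(x,t))² is continuous, bounded, and integrable on ℝ. Suppose the nonlocal MCH2 velocity equation ∂_t u(x,t) + u(x,t) ∂_x u(x,t) = - ∂_x [ (1/(2α₁)) ∫_ℝ e^{-|x-y|/α₁} p(y,t) dy ] holds for all (x,t), and that the mixed partial derivative ∂_t ∂_x u exists and is continuous. Let x̄ : [0,T) → ℝ be differentiable with ∂_x² u(x̄(t), t) = 0 for all t, and suppose the slope s(t) = ∂_x u(x̄(t), t) is differentiable with s'(t) = (∂_t ∂_x u)(x̄(t), t) + x̄'(t) (∂_x² u)(x̄(t), t). Then for all t ∈ [0,T): s'(t) = -(1/2) s(t)² + (1/α₁²) [ u(x̄(t),t)² + (g/2) ρ̄(x̄(t),t)² - (g α₂²/2) (∂_x ρ̄(x̄(t),t))² ] - (1/α₁²)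 (1/(2α₁)) ∫_ℝ e^{-|x̄(t)-y|/α₁} p(y,t) dy. -/
/-!
`K := K₁ * p` solves `(1 - α₁² ∂ₓ²) K = p`, so `∂ₓ² K = (K - p) / α₁²`. To see this, split the
kernel at `y = x`: then `2α₁ K(x) = e^{-x/α₁} L(x) + e^{x/α₁} R(x)`, where `L` and `R` are
integrals over the half-lines `(-∞, x]` and `(x, ∞)` whose derivatives the fundamental theorem of
calculus gives. Differentiating the velocity equation in `x` at the inflection point `x̄`, where
`u_xx = 0`, and exchanging the mixed partials gives `s' + s² = (p - K) / α₁²`. Substituting the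
definition of `p` then yields the claim.
-/

open Set MeasureTheory Function

section IntegralOverHalfLine

variable {E : Type*} [NormedAddCommGroup E] [NormedSpace ℝ E] [CompleteSpace E] {f : ℝ → E}

theorem hasDerivAt_setIntegral_Iic (hf : Continuous f) (hint : ∀ x, IntegrableOn f (Iic x))
    (x : ℝ) : HasDerivAt (fun x' => ∫ y in Iic x', f y) (f x) x := by
  have h : (fun x' => ∫ y in Iic x', f y) = fun x' => (∫ y in Iic x, f y) + ∫ y in x..x', f y := by
    funext x'
    rw [← intervalIntegral.integral_Iic_sub_Iic (hint x) (hint x'), add_sub_cancel]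
  rw [h]
  exact (hf.integral_hasStrictDerivAt x x).hasDerivAt.const_add _

theorem hasDerivAt_setIntegral_Ioi (hf : Continuous f) (hint : ∀ x, IntegrableOn f (Ioi x))
    (x : ℝ) : HasDerivAt (fun x' => ∫ y in Ioi x', f y) (-f x) x := by
  have h : (fun x' => ∫ y in Ioi x', f y) = fun x' => (∫ y in Ioi x, f y) - ∫ y in x..x', f y := by
    funext x'
    rw [← intervalIntegral.integral_Ioi_sub_Ioi' (hint x) (hint x'), sub_sub_cancel]
  rw [h]
  exact (hf.integral_hasStrictDerivAt x x).hasDerivAt.const_sub _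

end IntegralOverHalfLine

section GreenFunction

open Real

variable {a : ℝ} {q : ℝ → ℝ}

theorem integrableOn_exp_div_mul_Iic (ha : 0 ≤ a) (hq : Integrable q) (x : ℝ) :
    IntegrableOn (fun y => exp (y / a) * q y) (Iic x) := by
  refine hq.integrableOn.bdd_mul (c := exp (x / a)) (by fun_prop) ?_
  filter_upwards [ae_restrict_mem measurableSet_Iic] with y (hy : y ≤ x)
  rw [norm_of_nonneg (exp_pos _).le]
  gcongr

theorem integrableOn_exp_neg_div_mul_Ioi (ha : 0 ≤ a) (hq : Integrable q) (x : ℝ) :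
    IntegrableOn (fun y => exp (-y / a) * q y) (Ioi x) := by
  refine hq.integrableOn.bdd_mul (c := exp (-x / a)) (by fun_prop) ?_
  filter_upwards [ae_restrict_mem measurableSet_Ioi] with y (hy : x < y)
  rw [norm_of_nonneg (exp_pos _).le]
  gcongr

theorem integrable_exp_neg_abs_div_mul (ha : 0 ≤ a) (hq : Integrable q) (x : ℝ) :
    Integrable (fun y => exp (-|x - y| / a) * q y) := by
  refine hq.bdd_mul (c := 1) (by fun_prop) (ae_of_all _ fun y => ?_)
  rw [norm_of_nonneg (exp_pos _).le, exp_le_one_iff]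
  exact div_nonpos_of_nonpos_of_nonneg (neg_nonpos.2 (abs_nonneg _)) ha

/-- `K_a * q` for `K_a(x) = e^{-|x|/a} / (2a)`, the Green's function of `1 - a² ∂ₓ²`. -/
noncomputable def greenConv (a : ℝ) (q : ℝ → ℝ) (x : ℝ) : ℝ :=
  1 / (2 * a) * ∫ y, exp (-|x - y| / a) * q y

theorem greenConv_eq_integral_Iic_add_integral_Ioi (ha : 0 ≤ a) (hq : Integrable q) (x : ℝ) :
    greenConv a q x = 1 / (2 * a) * (exp (-x / a) * (∫ y in Iic x, exp (y / a) * q y)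
      + exp (x / a) * ∫ y in Ioi x, exp (-y / a) * q y) := by
  have hK := integrable_exp_neg_abs_div_mul ha hq x
  rw [greenConv, ← intervalIntegral.integral_Iic_add_Ioi (b := x) hK.integrableOn hK.integrableOn]
  congr 1
  congr 1
  · rw [← integral_const_mul]
    refine setIntegral_congr_fun measurableSet_Iic fun y (hy : y ≤ x) => ?_
    rw [abs_of_nonneg (sub_nonneg.2 hy), ← mul_assoc, ← exp_add]
    ring_nf
  · rw [← integral_const_mul]
    refine setIntegral_congr_fun measurableSet_Ioi fun y (hy : x < y) => ?_
    rw [abs_of_neg (sub_neg.2 hy), ← mul_assoc, ← exp_add]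
    ring_nf

theorem hasDerivAt_greenConv (ha : 0 < a) (hqc : Continuous q) (hq : Integrable q) (x : ℝ) :
    HasDerivAt (greenConv a q) (1 / (2 * a ^ 2) * (exp (x / a) * (∫ y in Ioi x, exp (-y / a) * q y)
      - exp (-x / a) * ∫ y in Iic x, exp (y / a) * q y)) x := by
  have hL := hasDerivAt_setIntegral_Iic (by fun_prop) (integrableOn_exp_div_mul_Iic ha.le hq) x
  have hR := hasDerivAt_setIntegral_Ioi (by fun_prop) (integrableOn_exp_neg_div_mul_Ioi ha.le hq) x
  rw [funext (greenConv_eq_integral_Iic_add_integral_Ioi ha.le hq)]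
  refine (((((hasDerivAt_id x).neg.div_const a).exp.mul hL).add
    (((hasDerivAt_id x).div_const a).exp.mul hR)).const_mul (1 / (2 * a))).congr_deriv ?_
  simp only [id, Pi.neg_apply, neg_div, exp_neg]
  field_simp
  ring

theorem hasDerivAt_deriv_greenConv (ha : 0 < a) (hqc : Continuous q) (hq : Integrable q)
    (x : ℝ) : HasDerivAt (deriv (greenConv a q)) ((greenConv a q x - q x) / a ^ 2) x := by
  have hL := hasDerivAt_setIntegral_Iic (by fun_prop) (integrableOn_exp_div_mul_Iic ha.le hq) x
  have hR := hasDerivAt_setIntegral_Ioi (by fun_prop) (integrableOn_exp_neg_div_mul_Ioi ha.le hq) x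
  rw [funext fun x => (hasDerivAt_greenConv ha hqc hq x).deriv]
  refine (((((hasDerivAt_id x).div_const a).exp.mul hR).sub
    (((hasDerivAt_id x).neg.div_const a).exp.mul hL)).const_mul (1 / (2 * a ^ 2))).congr_deriv ?_
  rw [greenConv_eq_integral_Iic_add_integral_Ioi ha.le hq]
  simp only [id, Pi.neg_apply, neg_div, exp_neg]
  field_simp
  ring

end GreenFunction

section PartialDerivatives

variable {E : Type*} [NormedAddCommGroup E] [NormedSpace ℝ E] {f : ℝ → ℝ → E} {x t : ℝ}

theorem HasFDerivAt.hasDerivAt_uncurry_left {f' : ℝ × ℝ →L[ℝ] E}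
    (hf : HasFDerivAt (uncurry f) f' (x, t)) : HasDerivAt (fun y => f y t) (f' (1, 0)) x :=
  hf.comp_hasDerivAt (f := fun y => (y, t)) x ((hasDerivAt_id x).prodMk (hasDerivAt_const x t))

theorem HasFDerivAt.hasDerivAt_uncurry_right {f' : ℝ × ℝ →L[ℝ] E}
    (hf : HasFDerivAt (uncurry f) f' (x, t)) : HasDerivAt (fun τ => f x τ) (f' (0, 1)) t :=
  hf.comp_hasDerivAt (f := fun τ => (x, τ)) t ((hasDerivAt_const t x).prodMk (hasDerivAt_id t))

theorem deriv_left_eq_fderiv_uncurry (hf : DifferentiableAt ℝ (uncurry f) (x, t)) :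
    deriv (fun y => f y t) x = fderiv ℝ (uncurry f) (x, t) (1, 0) :=
  hf.hasFDerivAt.hasDerivAt_uncurry_left.deriv

theorem deriv_right_eq_fderiv_uncurry (hf : DifferentiableAt ℝ (uncurry f) (x, t)) :
    deriv (fun τ => f x τ) t = fderiv ℝ (uncurry f) (x, t) (0, 1) :=
  hf.hasFDerivAt.hasDerivAt_uncurry_right.deriv

theorem DifferentiableAt.hasDerivAt_uncurry_left (hf : DifferentiableAt ℝ (uncurry f) (x, t)) :
    HasDerivAt (fun y => f y t) (deriv (fun y => f y t) x) x :=
  hf.hasFDerivAt.hasDerivAt_uncurry_left.differentiableAt.hasDerivAt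

variable {m n : WithTop ℕ∞}

theorem ContDiff.uncurry_deriv_left (hf : ContDiff ℝ n (uncurry f)) (hmn : m + 1 ≤ n) :
    ContDiff ℝ m (uncurry fun x t => deriv (fun y => f y t) x) := by
  have hdiff := (hf.of_le (le_add_self.trans hmn)).differentiable one_ne_zero
  have h : (uncurry fun x t => deriv (fun y => f y t) x) = fun z => fderiv ℝ (uncurry f) z (1, 0) :=
    funext fun z => deriv_left_eq_fderiv_uncurry (hdiff z)
  rw [h]
  exact (hf.fderiv_right hmn).clm_apply contDiff_const

theorem ContDiff.uncurry_deriv_right (hf : ContDiff ℝ n (uncurry f)) (hmn : m + 1 ≤ n) :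
    ContDiff ℝ m (uncurry fun x t => deriv (fun τ => f x τ) t) := by
  have hdiff := (hf.of_le (le_add_self.trans hmn)).differentiable one_ne_zero
  have h : (uncurry fun x t => deriv (fun τ => f x τ) t) = fun z => fderiv ℝ (uncurry f) z (0, 1) :=
    funext fun z => deriv_right_eq_fderiv_uncurry (hdiff z)
  rw [h]
  exact (hf.fderiv_right hmn).clm_apply contDiff_const

theorem ContDiff.deriv_deriv_comm (hf : ContDiff ℝ 2 (uncurry f)) (x t : ℝ) :
    deriv (fun τ => deriv (fun y => f y τ) x) t = deriv (fun y => deriv (fun τ => f y τ) t) x := by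
  set D := fderiv ℝ (uncurry f)
  have hdiff := hf.differentiable (by simp)
  have hD : HasFDerivAt D (fderiv ℝ D (x, t)) (x, t) :=
    ((hf.fderiv_right (m := 1) le_rfl).differentiable one_ne_zero _).hasFDerivAt
  have happ (v : ℝ × ℝ) :
      HasFDerivAt (fun z => D z v) ((ContinuousLinearMap.apply ℝ E v).comp (fderiv ℝ D (x, t))) (x, t) :=
    (ContinuousLinearMap.apply ℝ E v).hasFDerivAt.comp (x, t) hD
  rw [funext fun τ => deriv_left_eq_fderiv_uncurry (hdiff (x, τ)),
    funext fun y => deriv_right_eq_fderiv_uncurry (hdiff (y, t)),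
    (HasFDerivAt.hasDerivAt_uncurry_right (f := fun x τ => D (x, τ) (1, 0)) (happ _)).deriv,
    (HasFDerivAt.hasDerivAt_uncurry_left (f := fun y τ => D (y, τ) (0, 1)) (happ _)).deriv]
  exact hf.contDiffAt.isSymmSndFDerivAt (by simp) _ _

end PartialDerivatives

theorem mch2_slope_evolution_general
    (α₁ α₂ g T : ℝ) (hα₁ : 0 < α₁)
    (u ρb p : ℝ → ℝ → ℝ)
    (hp_def : ∀ x t : ℝ, p x t
      = (u x t)^2 + (α₁^2/2) * (deriv (fun y => u y t) x)^2
        + (g/2) * (ρb x t)^2 - (g*α₂^2/2) * (deriv (fun y => ρb y t) x)^2)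
    (hu : ContDiff ℝ 2 (Function.uncurry u))
    (hp_cont : ∀ t : ℝ, Continuous (fun x => p x t))
    (hp_int : ∀ t : ℝ, Integrable (fun x => p x t))
    (heq : ∀ x : ℝ, ∀ t ∈ Set.Ico (0 : ℝ) T,
      deriv (fun τ => u x τ) t + u x t * deriv (fun y => u y t) x
        = - deriv (fun x' => (1/(2*α₁)) * ∫ y : ℝ, Real.exp (-|x' - y|/α₁) * p y t) x)
    (xb xb' : ℝ → ℝ)
    (hinfl : ∀ t ∈ Set.Ico (0 : ℝ) T,
      deriv (fun y => deriv (fun z => u z t) y) (xb t) = 0)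
    (s s' : ℝ → ℝ)
    (hs : ∀ t : ℝ, s t = deriv (fun y => u y t) (xb t))
    (hchain : ∀ t ∈ Set.Ico (0 : ℝ) T,
      s' t = deriv (fun τ => deriv (fun y => u y τ) (xb t)) t
        + xb' t * deriv (fun y => deriv (fun z => u z t) y) (xb t)) :
    ∀ t ∈ Set.Ico (0 : ℝ) T,
      s' t = -(1/2) * (s t)^2
        + (1/α₁^2) * ((u (xb t) t)^2 + (g/2) * (ρb (xb t) t)^2
            - (g*α₂^2/2) * (deriv (fun y => ρb y t) (xb t))^2)
        - (1/α₁^2) * ((1/(2*α₁)) * ∫ y : ℝ, Real.exp (-|xb t - y|/α₁) * p y t) := by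
  intro t ht
  have hdiff := hu.differentiable two_ne_zero
  have hux := (hu.uncurry_deriv_left (m := 1) (by norm_num)).differentiable one_ne_zero
  have hut := (hu.uncurry_deriv_right (m := 1) (by norm_num)).differentiable one_ne_zero
  have hs'_eq : s' t = deriv (fun y => deriv (fun τ => u y τ) t) (xb t) := by
    rw [hchain t ht, hinfl t ht, mul_zero, add_zero, hu.deriv_deriv_comm]
  have hlhs := (hut (xb t, t)).hasDerivAt_uncurry_left.add
    ((hdiff (xb t, t)).hasDerivAt_uncurry_left.mul (hux (xb t, t)).hasDerivAt_uncurry_left)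
  have hrhs := (hasDerivAt_deriv_greenConv hα₁ (hp_cont t) (hp_int t) (xb t)).neg
  have hslope := hlhs.unique (hrhs.congr_of_eventuallyEq (.of_forall fun x => heq x t ht))
  rw [← hs'_eq, ← hs, hinfl t ht, hp_def, ← hs, greenConv] at hslope
  field_simp at hslope ⊢
  linear_combination hslope

/-- Slope evolution at a moving inflection point for the MCH2 system in nonlocal form
`u_t + u u_x = -∂_x K₁ * p`, `K₁(x) = (1/(2α₁)) e^{-|x|/α₁}`,
`p = u² + (α₁²/2)u_x² + (g/2)ρ̄² - (gα₂²/2)ρ̄_x²`: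
the slope `s(t) = u_x(x̄(t), t)` satisfies
`s' = -s²/2 + (1/α₁²)[u² + (g/2)ρ̄² - (gα₂²/2)ρ̄_x²]|_{x̄} - (1/α₁²)(K₁ * p)(x̄)`. -/
theorem mch2_slope_evolution
    (α₁ α₂ g T : ℝ) (hα₁ : 0 < α₁) (hα₂ : 0 < α₂) (hg : 0 < g) (hT : 0 < T)
    (u ρb p : ℝ → ℝ → ℝ)
    (hp_def : ∀ x t : ℝ, p x t
      = (u x t)^2 + (α₁^2/2) * (deriv (fun y => u y t) x)^2
        + (g/2) * (ρb x t)^2 - (g*α₂^2/2) * (deriv (fun y => ρb y t) x)^2)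
    (hu : ContDiff ℝ 2 (Function.uncurry u))
    (hρb : ∀ t : ℝ, ContDiff ℝ 1 (fun x => ρb x t))
    (hp_cont : ∀ t : ℝ, Continuous (fun x => p x t))
    (hp_bdd : ∀ t : ℝ, ∃ C, ∀ x, |p x t| ≤ C)
    (hp_int : ∀ t : ℝ, Integrable (fun x => p x t))
    (heq : ∀ x : ℝ, ∀ t ∈ Set.Ico (0 : ℝ) T,
      deriv (fun τ => u x τ) t + u x t * deriv (fun y => u y t) x
        = - deriv (fun x' => (1/(2*α₁)) * ∫ y : ℝ, Real.exp (-|x' - y|/α₁) * p y t) x)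
    (xb xb' : ℝ → ℝ)
    (hxb : ∀ t ∈ Set.Ico (0 : ℝ) T, HasDerivWithinAt xb (xb' t) (Set.Ico 0 T) t)
    (hinfl : ∀ t ∈ Set.Ico (0 : ℝ) T,
      deriv (fun y => deriv (fun z => u z t) y) (xb t) = 0)
    (s s' : ℝ → ℝ)
    (hs : ∀ t : ℝ, s t = deriv (fun y => u y t) (xb t))
    (hs' : ∀ t ∈ Set.Ico (0 : ℝ) T, HasDerivWithinAt s (s' t) (Set.Ico 0 T) t)
    (hchain : ∀ t ∈ Set.Ico (0 : ℝ) T,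
      s' t = deriv (fun τ => deriv (fun y => u y τ) (xb t)) t
        + xb' t * deriv (fun y => deriv (fun z => u z t) y) (xb t)) :
    ∀ t ∈ Set.Ico (0 : ℝ) T,
      s' t = -(1/2) * (s t)^2
        + (1/α₁^2) * ((u (xb t) t)^2 + (g/2) * (ρb (xb t) t)^2
            - (g*α₂^2/2) * (deriv (fun y => ρb y t) (xb t))^2)
        - (1/α₁^2) * ((1/(2*α₁)) * ∫ y : ℝ, Real.exp (-|xb t - y|/α₁) * p y t) :=
  mch2_slope_evolution_general α₁ α₂ g T hα₁ u ρb p hp_def hu hp_cont hp_int heq xb xb' hinfl s s'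
    hs hchain
end
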